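/- arXiv:math/0302033 — 6 statements merged into one kernel-verified Lean document; each statement's English description precedes it below -/
import Mathlib

section
/- For every s ≥ 0 and every α ∈ ℝ, the kernel L⁺_s is square integrable on (α,∞) × (α,∞), i.e. ∫_α^∞ ∫_α^∞ L⁺_s(x,y)² dx dy < ∞ (so the associated integral operator on L²(α,∞) is Hilbert–Schmidt). -/
open MeasureTheory Real Set

/-- `L⁺_s(x,y) = ∫₀^∞ e^{−z·s}·A(x+z)·A(y+z) dz`, the extended Airy kernel entry
for `s = τ_i − τ_j ≥ 0`. -/
noncomputable def Lplus (A : ℝ → ℝ) (s x y : ℝ) : ℝ :=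
  ∫ z in Set.Ioi (0 : ℝ), Real.exp (-(z * s)) * A (x + z) * A (y + z)

/-! On `t ≤ 0` the linear bound `1 + |t|` is dominated by `e^{-t}`, so `|A t| ≤ C e^{-t}` for all
`t`. Since `e^{-zs} ≤ 1` for `s, z ≥ 0`, this gives
`|L⁺_s(x,y)| ≤ C² e^{-x} e^{-y} ∫₀^∞ e^{-z} dz = C² e^{-x} e^{-y}`,
and the square of the right-hand side is integrable on every quadrant `(α,∞) × (β,∞)`. -/

lemma abs_le_mul_exp_neg_of_le_mul_one_add_abs {f : ℝ → ℝ} {C : ℝ}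
    (hpos : ∀ t, 0 ≤ t → |f t| ≤ C * exp (-t)) (hneg : ∀ t, t ≤ 0 → |f t| ≤ C * (1 + |t|))
    (t : ℝ) : |f t| ≤ C * exp (-t) := by
  rcases le_or_gt 0 t with ht | ht
  · exact hpos t ht
  have hC : 0 ≤ C := by simpa using (abs_nonneg _).trans (hpos 0 le_rfl)
  have h_one_add : 1 + |t| ≤ exp (-t) := by
    rw [abs_of_neg ht]
    linarith [add_one_le_exp (-t)]
  exact (hneg t ht.le).trans (mul_le_mul_of_nonneg_left h_one_add hC)

lemma abs_Lplus_le {A : ℝ → ℝ} {C s : ℝ} (hs : 0 ≤ s) (hA : ∀ t, |A t| ≤ C * exp (-t))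
    (x y : ℝ) : |Lplus A s x y| ≤ C ^ 2 * (exp (-x) * exp (-y)) := by
  have hC : 0 ≤ C := by simpa using (abs_nonneg _).trans (hA 0)
  set K := C ^ 2 * (exp (-x) * exp (-y))
  have hbound : ∀ᵐ z ∂(volume.restrict (Ioi (0 : ℝ))),
      ‖exp (-(z * s)) * A (x + z) * A (y + z)‖ ≤ K * exp (-z) := by
    filter_upwards [ae_restrict_mem measurableSet_Ioi] with z (hz : 0 < z)
    have h_damping : exp (-(z * s)) ≤ 1 := exp_le_one_iff.mpr (neg_nonpos.mpr (mul_nonneg hz.le hs))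
    have h_decay : exp (-z) * exp (-z) ≤ exp (-z) :=
      mul_le_of_le_one_left (exp_pos _).le (exp_le_one_iff.mpr (by linarith))
    calc ‖exp (-(z * s)) * A (x + z) * A (y + z)‖
        = exp (-(z * s)) * |A (x + z)| * |A (y + z)| := by
          rw [norm_eq_abs, abs_mul, abs_mul, abs_of_pos (exp_pos _)]
      _ ≤ 1 * (C * exp (-(x + z))) * (C * exp (-(y + z))) := by
          gcongr <;> exact hA _
      _ = K * (exp (-z) * exp (-z)) := by
          simp only [K, neg_add, exp_add]
          ring
      _ ≤ K * exp (-z) := by gcongr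
  have h_majorant : IntegrableOn (fun z => K * exp (-z)) (Ioi 0) := by
    simpa [IntegrableOn] using (exp_neg_integrableOn_Ioi 0 one_pos).const_mul K
  calc |Lplus A s x y| ≤ ∫ z in Ioi (0 : ℝ), K * exp (-z) :=
        norm_integral_le_of_norm_le h_majorant hbound
    _ = K := by rw [integral_const_mul, integral_exp_neg_Ioi_zero, mul_one]

lemma stronglyMeasurable_Lplus {A : ℝ → ℝ} (hA : Continuous A) (s : ℝ) :
    StronglyMeasurable (fun p : ℝ × ℝ => Lplus A s p.1 p.2) := by
  have h_integrand : StronglyMeasurable (fun q : (ℝ × ℝ) × ℝ =>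
      exp (-(q.2 * s)) * A (q.1.1 + q.2) * A (q.1.2 + q.2)) :=
    Continuous.stronglyMeasurable (by fun_prop)
  exact h_integrand.integral_prod_right' (ν := volume.restrict (Ioi 0))

lemma integrableOn_sq_of_abs_le_exp_neg {F : ℝ × ℝ → ℝ} {K : ℝ} (hF : StronglyMeasurable F)
    (hbound : ∀ p, |F p| ≤ K * (exp (-p.1) * exp (-p.2))) (α β : ℝ) :
    IntegrableOn (fun p => F p ^ 2) (Ioi α ×ˢ Ioi β) := by
  have h_majorant : Integrable (fun p : ℝ × ℝ => K ^ 2 * exp (-2 * p.1) * exp (-2 * p.2))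
      ((volume.restrict (Ioi α)).prod (volume.restrict (Ioi β))) :=
    ((exp_neg_integrableOn_Ioi α two_pos).const_mul _).mul_prod
      (exp_neg_integrableOn_Ioi β two_pos)
  rw [IntegrableOn, Measure.volume_eq_prod, ← Measure.prod_restrict]
  refine h_majorant.mono' (hF.pow 2).aestronglyMeasurable (Filter.Eventually.of_forall fun p => ?_)
  calc ‖F p ^ 2‖ = |F p| ^ 2 := by rw [norm_eq_abs, abs_pow]
    _ ≤ (K * (exp (-p.1) * exp (-p.2))) ^ 2 := pow_le_pow_left₀ (abs_nonneg _) (hbound p) 2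
    _ = K ^ 2 * exp (-2 * p.1) * exp (-2 * p.2) := by
        rw [show -2 * p.1 = -p.1 + -p.1 by ring, show -2 * p.2 = -p.2 + -p.2 by ring,
          exp_add, exp_add]
        ring

theorem lplus_square_integrable_general
    (A : ℝ → ℝ) (hA : ContDiff ℝ 2 A)
    (C : ℝ)
    (hA1 : ∀ t : ℝ, 0 ≤ t → |A t| ≤ C * Real.exp (-t))
    (hA2 : ∀ t : ℝ, t ≤ 0 → |A t| ≤ C * (1 + |t|))
    (s : ℝ) (hs : 0 ≤ s) (α : ℝ) :
    IntegrableOn (fun p : ℝ × ℝ => (Lplus A s p.1 p.2) ^ 2)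
      (Set.Ioi α ×ˢ Set.Ioi α) := by
  have hA_exp := abs_le_mul_exp_neg_of_le_mul_one_add_abs hA1 hA2
  exact integrableOn_sq_of_abs_le_exp_neg (stronglyMeasurable_Lplus hA.continuous s)
    (fun p => abs_Lplus_le hs hA_exp p.1 p.2) α α

/-- For every `s ≥ 0` and every `α ∈ ℝ`, the kernel `L⁺_s` is square integrable on
`(α,∞) × (α,∞)`, i.e. `∫_α^∞ ∫_α^∞ L⁺_s(x,y)² dx dy < ∞`; hence the associated
integral operator on `L²(α,∞)` is Hilbert–Schmidt. -/
theorem lplus_square_integrable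
    (A : ℝ → ℝ) (hA : ContDiff ℝ 2 A)
    (hAiry : ∀ t : ℝ, deriv (deriv A) t = t * A t)
    (C : ℝ) (hC : 0 < C)
    (hA1 : ∀ t : ℝ, 0 ≤ t → |A t| ≤ C * Real.exp (-t))
    (hA1' : ∀ t : ℝ, 0 ≤ t → |deriv A t| ≤ C * Real.exp (-t))
    (hA2 : ∀ t : ℝ, t ≤ 0 → |A t| ≤ C * (1 + |t|))
    (hA2' : ∀ t : ℝ, t ≤ 0 → |deriv A t| ≤ C * (1 + |t|))
    (s : ℝ) (hs : 0 ≤ s) (α : ℝ) :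
    IntegrableOn (fun p : ℝ × ℝ => (Lplus A s p.1 p.2) ^ 2)
      (Set.Ioi α ×ˢ Set.Ioi α) :=
  lplus_square_integrable_general A hA C hA1 hA2 s hs α
end

section
/- For every s ≥ 0 and all x, y ∈ ℝ, the sum of the partial derivatives of the kernel entry satisfies ∂ₓ L⁺_s(x,y) + ∂_y L⁺_s(x,y) = s·L⁺_s(x,y) − A(x)·A(y). -/
/-!
Since `A` and `A'` decay like `e^{-t}`, the integrands and their `x`- and `y`-derivatives are
dominated by a multiple of `e^{-2z}`, locally uniformly in `x` and `y`, so `∂ₓ` and `∂_y` pass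
under the integral sign. Then `∂ₓL⁺ + ∂_yL⁺ = ∫₀^∞ e^{-zs} ∂_z (A(x+z) A(y+z)) dz`, and
integrating by parts in `z` moves the derivative onto `e^{-zs}`, which gives `s·L⁺`, while the
boundary term at `z = 0` is `-A(x) A(y)`.
-/

open MeasureTheory Real Set

open Filter Topology

def AiryBound (C : ℝ) (f : ℝ → ℝ) : Prop :=
  (∀ t, 0 ≤ t → |f t| ≤ C * exp (-t)) ∧ ∀ t, t ≤ 0 → |f t| ≤ C * (1 + |t|)

namespace AiryBound

variable {C D : ℝ} {f g : ℝ → ℝ}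

lemma nonneg (hf : AiryBound C f) : 0 ≤ C := by
  have h := hf.1 0 le_rfl
  rw [neg_zero, exp_zero, mul_one] at h
  exact (abs_nonneg _).trans h

lemma abs_shift_le (hf : AiryBound C f) {a u z : ℝ} (hau : a ≤ u) (hz : 0 ≤ z) :
    |f (u + z)| ≤ C * (1 + |a|) * exp (-a) * exp (-z) := by
  have hC := hf.nonneg
  rw [mul_assoc _ (exp (-a)), ← exp_add, ← neg_add]
  rcases le_total 0 (u + z) with h | h
  · calc |f (u + z)| ≤ C * exp (-(u + z)) := hf.1 _ h
      _ ≤ C * ((1 + |a|) * exp (-(a + z))) := by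
        gcongr
        calc exp (-(u + z)) ≤ exp (-(a + z)) := exp_le_exp.2 (by linarith)
          _ ≤ (1 + |a|) * exp (-(a + z)) := le_mul_of_one_le_left (exp_pos _).le (by simp)
      _ = _ := by ring
  · -- here `a ≤ u + z ≤ 0`, so `|u + z| ≤ |a|` and `1 ≤ exp (-(a + z))`
    calc |f (u + z)| ≤ C * (1 + |u + z|) := hf.2 _ h
      _ ≤ C * (1 + |a|) := by
        have : |u + z| ≤ |a| := by
          rw [abs_of_nonpos h, abs_of_nonpos (by linarith)]
          linarith
        gcongr
      _ ≤ C * (1 + |a|) * exp (-(a + z)) :=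
        le_mul_of_one_le_right (by positivity) (one_le_exp (by linarith))

end AiryBound

section ShiftedProduct

variable {C C' D D' s : ℝ} {f g : ℝ → ℝ}

lemma abs_exp_mul_shift_mul_shift_le (hf : AiryBound C f) (hg : AiryBound D g) (hs : 0 ≤ s)
    {a b u v z : ℝ} (hau : a ≤ u) (hbv : b ≤ v) (hz : 0 ≤ z) :
    |exp (-(z * s)) * f (u + z) * g (v + z)|
      ≤ C * (1 + |a|) * exp (-a) * (D * (1 + |b|) * exp (-b)) * exp (-2 * z) := by
  have hexp : exp (-(z * s)) ≤ 1 := exp_le_one_iff.2 (by nlinarith)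
  rw [abs_mul, abs_mul, abs_exp]
  calc exp (-(z * s)) * |f (u + z)| * |g (v + z)|
      ≤ 1 * (C * (1 + |a|) * exp (-a) * exp (-z)) * (D * (1 + |b|) * exp (-b) * exp (-z)) := by
        have := hf.nonneg; have := hg.nonneg
        gcongr
        exacts [hf.abs_shift_le hau hz, hg.abs_shift_le hbv hz]
    _ = _ := by rw [show -2 * z = -z + -z by ring, exp_add]; ring

lemma integrableOn_exp_mul_shift_mul_shift (hf : AiryBound C f) (hg : AiryBound D g)
    (hfc : Continuous f) (hgc : Continuous g) (hs : 0 ≤ s) (u v : ℝ) :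
    IntegrableOn (fun z => exp (-(z * s)) * f (u + z) * g (v + z)) (Ioi 0) := by
  refine ((exp_neg_integrableOn_Ioi 0 two_pos).const_mul
    (C * (1 + |u|) * exp (-u) * (D * (1 + |v|) * exp (-v)))).mono' (by fun_prop) ?_
  filter_upwards [self_mem_ae_restrict measurableSet_Ioi] with z hz
  exact abs_exp_mul_shift_mul_shift_le hf hg hs le_rfl le_rfl (le_of_lt hz)

lemma hasDerivAt_integral_exp_mul_shift_mul_shift_left (hf : ContDiff ℝ 1 f)
    (hfb : AiryBound C f) (hf'b : AiryBound C' (deriv f)) (hgc : Continuous g)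
    (hgb : AiryBound D g) (hs : 0 ≤ s) (u v : ℝ) :
    HasDerivAt (fun u => ∫ z in Ioi 0, exp (-(z * s)) * f (u + z) * g (v + z))
      (∫ z in Ioi 0, exp (-(z * s)) * deriv f (u + z) * g (v + z)) u := by
  have hf'c : Continuous (deriv f) := hf.continuous_deriv le_rfl
  refine (hasDerivAt_integral_of_dominated_loc_of_deriv_le
    (F' := fun u z => exp (-(z * s)) * deriv f (u + z) * g (v + z)) (Ioi_mem_nhds (sub_one_lt u))
    (.of_forall fun u' => (integrableOn_exp_mul_shift_mul_shift hfb hgb hf.continuous hgc hs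
      u' v).aestronglyMeasurable)
    (integrableOn_exp_mul_shift_mul_shift hfb hgb hf.continuous hgc hs u v)
    (integrableOn_exp_mul_shift_mul_shift hf'b hgb hf'c hgc hs u v).aestronglyMeasurable
    ?_ ((exp_neg_integrableOn_Ioi 0 two_pos).const_mul
      (C' * (1 + |u - 1|) * exp (-(u - 1)) * (D * (1 + |v|) * exp (-v)))) ?_).2
  · filter_upwards [self_mem_ae_restrict measurableSet_Ioi] with z hz u' hu'
    exact abs_exp_mul_shift_mul_shift_le hf'b hgb hs (le_of_lt hu') le_rfl (le_of_lt hz)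
  · refine .of_forall fun z u' _ => ?_
    have hshift : HasDerivAt (fun u => f (u + z)) (deriv f (u' + z)) u' :=
      ((hf.differentiable one_ne_zero) _).hasDerivAt.comp_add_const u' z
    exact (hshift.const_mul _).mul_const _

lemma hasDerivAt_integral_exp_mul_shift_mul_shift_right (hfc : Continuous f)
    (hfb : AiryBound C f) (hg : ContDiff ℝ 1 g) (hgb : AiryBound D g)
    (hg'b : AiryBound D' (deriv g)) (hs : 0 ≤ s) (u v : ℝ) :
    HasDerivAt (fun v => ∫ z in Ioi 0, exp (-(z * s)) * f (u + z) * g (v + z))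
      (∫ z in Ioi 0, exp (-(z * s)) * f (u + z) * deriv g (v + z)) v := by
  simp only [mul_right_comm _ (f _)]
  exact hasDerivAt_integral_exp_mul_shift_mul_shift_left hg hgb hg'b hfc hfb hs v u

lemma tendsto_exp_mul_shift_mul_shift_atTop (hf : AiryBound C f) (hg : AiryBound D g)
    (hs : 0 ≤ s) (u v : ℝ) :
    Tendsto (fun z => exp (-(z * s)) * f (u + z) * g (v + z)) atTop (𝓝 0) := by
  have hdecay : Tendsto (fun z : ℝ => exp (-2 * z)) atTop (𝓝 0) :=
    tendsto_exp_atBot.comp (tendsto_id.const_mul_atTop_of_neg (by norm_num))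
  refine squeeze_zero_norm' ?_ (by
    simpa only [mul_zero] using
      hdecay.const_mul (C * (1 + |u|) * exp (-u) * (D * (1 + |v|) * exp (-v))))
  filter_upwards [eventually_ge_atTop 0] with z hz
  exact abs_exp_mul_shift_mul_shift_le hf hg hs le_rfl le_rfl hz

/-- Integration by parts in `z`: the two integrals on the left add up to the integral of
`e^{-zs} ∂_z (f(u+z) g(v+z))`. -/
lemma integral_exp_mul_deriv_shift_mul_shift_add (hf : ContDiff ℝ 1 f) (hfb : AiryBound C f)
    (hf'b : AiryBound C' (deriv f)) (hg : ContDiff ℝ 1 g) (hgb : AiryBound D g)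
    (hg'b : AiryBound D' (deriv g)) (hs : 0 ≤ s) (u v : ℝ) :
    (∫ z in Ioi 0, exp (-(z * s)) * deriv f (u + z) * g (v + z))
      + ∫ z in Ioi 0, exp (-(z * s)) * f (u + z) * deriv g (v + z)
      = s * (∫ z in Ioi 0, exp (-(z * s)) * f (u + z) * g (v + z)) - f u * g v := by
  have hderiv : ∀ z, HasDerivAt (fun z => exp (-(z * s)) * f (u + z) * g (v + z))
      (exp (-(z * s)) * deriv f (u + z) * g (v + z)
        + exp (-(z * s)) * f (u + z) * deriv g (v + z)
        - s * (exp (-(z * s)) * f (u + z) * g (v + z))) z := by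
    intro z
    have hfz : HasDerivAt (fun z => f (u + z)) (deriv f (u + z)) z :=
      ((hf.differentiable one_ne_zero) _).hasDerivAt.comp_const_add u z
    have hgz : HasDerivAt (fun z => g (v + z)) (deriv g (v + z)) z :=
      ((hg.differentiable one_ne_zero) _).hasDerivAt.comp_const_add v z
    exact (((hasDerivAt_mul_const s).fun_neg.exp.fun_mul hfz).fun_mul hgz).congr_deriv (by ring)
  have hFx := integrableOn_exp_mul_shift_mul_shift hf'b hgb (hf.continuous_deriv le_rfl)
    hg.continuous hs u v
  have hFy := integrableOn_exp_mul_shift_mul_shift hfb hg'b hf.continuous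
    (hg.continuous_deriv le_rfl) hs u v
  have hF := integrableOn_exp_mul_shift_mul_shift hfb hgb hf.continuous hg.continuous hs u v
  have hparts := integral_Ioi_of_hasDerivAt_of_tendsto' (fun z _ => hderiv z)
    ((hFx.fun_add hFy).fun_sub (hF.const_mul s))
    (tendsto_exp_mul_shift_mul_shift_atTop hfb hgb hs u v)
  rw [integral_sub (hFx.fun_add hFy) (hF.const_mul s), integral_add hFx hFy, integral_const_mul]
    at hparts
  simp only [zero_mul, neg_zero, exp_zero, add_zero, one_mul] at hparts
  linarith

end ShiftedProduct

theorem lplus_deriv_sum_general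
    (A : ℝ → ℝ) (hA : ContDiff ℝ 2 A)
    (C : ℝ)
    (hA1 : ∀ t : ℝ, 0 ≤ t → |A t| ≤ C * Real.exp (-t))
    (hA1' : ∀ t : ℝ, 0 ≤ t → |deriv A t| ≤ C * Real.exp (-t))
    (hA2 : ∀ t : ℝ, t ≤ 0 → |A t| ≤ C * (1 + |t|))
    (hA2' : ∀ t : ℝ, t ≤ 0 → |deriv A t| ≤ C * (1 + |t|))
    (s : ℝ) (hs : 0 ≤ s) (x y : ℝ) :
    deriv (fun x' : ℝ => Lplus A s x' y) x + deriv (fun y' : ℝ => Lplus A s x y') y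
      = s * Lplus A s x y - A x * A y := by
  have hA₁ : ContDiff ℝ 1 A := hA.of_le one_le_two
  have hAb : AiryBound C A := ⟨hA1, hA2⟩
  have hA'b : AiryBound C (deriv A) := ⟨hA1', hA2'⟩
  unfold Lplus
  have hx :=
    hasDerivAt_integral_exp_mul_shift_mul_shift_left hA₁ hAb hA'b hA₁.continuous hAb hs x y
  have hy :=
    hasDerivAt_integral_exp_mul_shift_mul_shift_right hA₁.continuous hAb hA₁ hAb hA'b hs x y
  rw [hx.deriv, hy.deriv]
  exact integral_exp_mul_deriv_shift_mul_shift_add hA₁ hAb hA'b hA₁ hAb hA'b hs x y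

/-- For every `s ≥ 0` and all `x, y ∈ ℝ`,
`∂ₓ L⁺_s(x,y) + ∂_y L⁺_s(x,y) = s·L⁺_s(x,y) − A(x)·A(y)`. -/
theorem lplus_deriv_sum
    (A : ℝ → ℝ) (hA : ContDiff ℝ 2 A)
    (hAiry : ∀ t : ℝ, deriv (deriv A) t = t * A t)
    (C : ℝ) (hC : 0 < C)
    (hA1 : ∀ t : ℝ, 0 ≤ t → |A t| ≤ C * Real.exp (-t))
    (hA1' : ∀ t : ℝ, 0 ≤ t → |deriv A t| ≤ C * Real.exp (-t))
    (hA2 : ∀ t : ℝ, t ≤ 0 → |A t| ≤ C * (1 + |t|))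
    (hA2' : ∀ t : ℝ, t ≤ 0 → |deriv A t| ≤ C * (1 + |t|))
    (s : ℝ) (hs : 0 ≤ s) (x y : ℝ) :
    deriv (fun x' : ℝ => Lplus A s x' y) x + deriv (fun y' : ℝ => Lplus A s x y') y
      = s * Lplus A s x y - A x * A y :=
  lplus_deriv_sum_general A hA C hA1 hA1' hA2 hA2' s hs x y
end

section
/- For every s ≥ 0 and all x, y ∈ ℝ, the kernel entry L⁺_s is twice differentiable in each variable and satisfies ∂ₓ² L⁺_s(x,y) − x·L⁺_s(x,y) = ∫₀^∞ z·e^{−z·s}·A(x+z)·A(y+z) dz = ∂_y² L⁺_s(x,y) − y·L⁺_s(x,y); in particular the 'Airy operator' d²/dx² − x applied in the first variable agrees with d²/dy² − y applied in the second variable (the kernel-level statement that D² − M commutes with L). -/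
open MeasureTheory Real Set

/-!
For fixed `y`, `x ↦ L⁺_s(x, y)` is `∫_{z>0} w(z) A(x + z) dz` with the bounded weight
`w(z) = e^{-zs} A(y + z)`. Since `A`, `A'` and `A'' = t A` decay exponentially at `+∞`, and only
values of `A` on `(x, ∞)` enter, one may differentiate twice under the integral sign, and then
`A''(x + z) - x A(x + z) = z A(x + z)`. The identity in `y` follows from the symmetry of `L⁺_s`.
-/

open Filter Asymptotics

lemma isBigO_exp_neg_of_abs_le {g : ℝ → ℝ} {C r : ℝ} (hr : r ≤ 1)
    (hg : ∀ t, 0 ≤ t → |g t| ≤ C * exp (-t)) : g =O[atTop] fun t => exp (-r * t) := by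
  refine IsBigO.of_bound |C| ((eventually_ge_atTop 0).mono fun t ht => ?_)
  rw [Real.norm_eq_abs, norm_of_nonneg (exp_pos _).le]
  calc |g t| ≤ C * exp (-t) := hg t ht
    _ ≤ |C| * exp (-r * t) := by gcongr; exact le_abs_self C; nlinarith

lemma Asymptotics.IsBigO.id_mul_of_exp {g : ℝ → ℝ} {r r' : ℝ} (hr : r' < r)
    (ho : g =O[atTop] fun t => exp (-r * t)) :
    (fun t => t * g t) =O[atTop] fun t => exp (-r' * t) := by
  have h := ((isLittleO_pow_exp_pos_mul_atTop 1 (sub_pos.2 hr)).isBigO).mul ho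
  simp only [pow_one, ← exp_add] at h
  exact h.congr_right fun t => by ring_nf

lemma Continuous.exists_abs_le_mul_exp_of_isBigO {g : ℝ → ℝ} {r : ℝ} (hg : Continuous g)
    (ho : g =O[atTop] fun t => exp (-r * t)) (a : ℝ) :
    ∃ K, ∀ t, a ≤ t → |g t| ≤ K * exp (-r * t) := by
  obtain ⟨c, hc⟩ := ho.bound
  obtain ⟨N, hN⟩ := eventually_atTop.1 hc
  have hgexp : Continuous fun t => g t * exp (r * t) := by fun_prop
  obtain ⟨M, hM⟩ := isCompact_Icc.exists_bound_of_continuousOn (hgexp.continuousOn (s := Icc a N))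
  refine ⟨max M c, fun t ht => ?_⟩
  rcases le_total t N with htN | htN
  · have h := hM t ⟨ht, htN⟩
    rw [norm_mul, Real.norm_eq_abs, norm_of_nonneg (exp_pos _).le] at h
    calc |g t| = |g t| * exp (r * t) * exp (-r * t) := by
          rw [mul_assoc, ← exp_add]; ring_nf; rw [exp_zero, mul_one]
      _ ≤ max M c * exp (-r * t) := by gcongr; exact h.trans (le_max_left _ _)
  · have h := hN t htN
    rw [Real.norm_eq_abs, norm_of_nonneg (exp_pos _).le] at h
    exact h.trans (by gcongr; exact le_max_right _ _)

lemma Continuous.exists_abs_comp_add_le_of_isBigO {g : ℝ → ℝ} {r : ℝ} (hr : 0 ≤ r)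
    (hg : Continuous g) (ho : g =O[atTop] fun t => exp (-r * t)) (a : ℝ) :
    ∃ K, ∀ x, a ≤ x → ∀ z, 0 ≤ z → |g (x + z)| ≤ K * exp (-r * z) := by
  obtain ⟨K, hK⟩ := hg.exists_abs_le_mul_exp_of_isBigO ho a
  have hK0 : 0 ≤ K := nonneg_of_mul_nonneg_left ((abs_nonneg _).trans (hK a le_rfl)) (exp_pos _)
  refine ⟨K * exp (-r * a), fun x hx z hz => (hK _ (by linarith)).trans ?_⟩
  rw [mul_assoc, ← exp_add]
  gcongr
  nlinarith

lemma integrableOn_Ioi_mul_comp_add {w f : ℝ → ℝ} {a r : ℝ} (hr : 0 < r)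
    (hw_meas : AEStronglyMeasurable w (volume.restrict (Ioi 0)))
    (hw : ∀ z ∈ Ioi (0 : ℝ), |w z| ≤ a) (hf : Continuous f)
    (ho : f =O[atTop] fun t => exp (-r * t)) (x : ℝ) :
    IntegrableOn (fun z => w z * f (x + z)) (Ioi 0) := by
  obtain ⟨K, hK⟩ := hf.exists_abs_comp_add_le_of_isBigO hr.le ho x
  refine Integrable.mono' ((exp_neg_integrableOn_Ioi 0 hr).const_mul (a * K))
    (hw_meas.mul (hf.comp (continuous_const_add x)).aestronglyMeasurable) ?_
  refine (ae_restrict_iff' measurableSet_Ioi).2 (Eventually.of_forall fun z hz => ?_)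
  rw [Real.norm_eq_abs, abs_mul, mul_assoc]
  exact mul_le_mul (hw z hz) (hK x le_rfl z (le_of_lt hz)) (abs_nonneg _)
    ((abs_nonneg _).trans (hw z hz))

lemma hasDerivAt_integral_Ioi_mul_comp_add {w f f' : ℝ → ℝ} {a r : ℝ} (hr : 0 < r)
    (hw_meas : AEStronglyMeasurable w (volume.restrict (Ioi 0)))
    (hw : ∀ z ∈ Ioi (0 : ℝ), |w z| ≤ a) (hf : ∀ t, HasDerivAt f (f' t) t)
    (hf'c : Continuous f') (ho : f =O[atTop] fun t => exp (-r * t))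
    (ho' : f' =O[atTop] fun t => exp (-r * t)) (x₀ : ℝ) :
    HasDerivAt (fun x => ∫ z in Ioi 0, w z * f (x + z)) (∫ z in Ioi 0, w z * f' (x₀ + z)) x₀ := by
  have hfc : Continuous f := continuous_iff_continuousAt.2 fun t => (hf t).continuousAt
  obtain ⟨K, hK⟩ := hf'c.exists_abs_comp_add_le_of_isBigO hr.le ho' (x₀ - 1)
  refine (hasDerivAt_integral_of_dominated_loc_of_deriv_le (F := fun x z => w z * f (x + z))
    (F' := fun x z => w z * f' (x + z)) (Metric.ball_mem_nhds x₀ one_pos)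
    (Eventually.of_forall fun x => ?_) (integrableOn_Ioi_mul_comp_add hr hw_meas hw hfc ho x₀)
    (hw_meas.mul (hf'c.comp (continuous_const_add x₀)).aestronglyMeasurable)
    (bound := fun z => a * K * exp (-r * z)) ?_
    ((exp_neg_integrableOn_Ioi 0 hr).const_mul (a * K)) ?_).2
  · exact hw_meas.mul (hfc.comp (continuous_const_add x)).aestronglyMeasurable
  · refine (ae_restrict_iff' measurableSet_Ioi).2 (Eventually.of_forall fun z hz x hx => ?_)
    have hx' : x₀ - 1 ≤ x := by
      have := (abs_lt.1 (Real.dist_eq x x₀ ▸ Metric.mem_ball.1 hx)).1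
      linarith
    rw [Real.norm_eq_abs, abs_mul, mul_assoc]
    exact mul_le_mul (hw z hz) (hK x hx' z (le_of_lt hz)) (abs_nonneg _)
      ((abs_nonneg _).trans (hw z hz))
  · exact Eventually.of_forall fun z x _ =>
      ((hf (x + z)).comp x ((hasDerivAt_id x).add_const z)).const_mul (w z) |>.congr_deriv
        (by simp)

theorem airy_operator_integral_mul_comp_add {A w : ℝ → ℝ} {C a : ℝ} (hA : ContDiff ℝ 2 A)
    (hAiry : ∀ t, deriv (deriv A) t = t * A t)
    (hA1 : ∀ t, 0 ≤ t → |A t| ≤ C * exp (-t)) (hA1' : ∀ t, 0 ≤ t → |deriv A t| ≤ C * exp (-t))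
    (hw_meas : AEStronglyMeasurable w (volume.restrict (Ioi 0)))
    (hw : ∀ z ∈ Ioi (0 : ℝ), |w z| ≤ a) (x : ℝ) :
    DifferentiableAt ℝ (fun x => ∫ z in Ioi 0, w z * A (x + z)) x ∧
    DifferentiableAt ℝ (deriv fun x => ∫ z in Ioi 0, w z * A (x + z)) x ∧
    deriv (deriv fun x => ∫ z in Ioi 0, w z * A (x + z)) x
        - x * ∫ z in Ioi 0, w z * A (x + z) = ∫ z in Ioi 0, z * w z * A (x + z) := by
  have hr : (0 : ℝ) < 1 / 2 := by norm_num
  have hAo := isBigO_exp_neg_of_abs_le (r := 1 / 2) (by norm_num) hA1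
  have hA'o := isBigO_exp_neg_of_abs_le (r := 1 / 2) (by norm_num) hA1'
  have hA''o := (isBigO_exp_neg_of_abs_le (r := 1) le_rfl hA1).id_mul_of_exp
    (show (1 / 2 : ℝ) < 1 by norm_num)
  have hAc : Continuous A := hA.continuous
  have hA''c : Continuous fun t => t * A t := continuous_id.mul hAc
  have hD1 (x : ℝ) := hasDerivAt_integral_Ioi_mul_comp_add hr hw_meas hw
    (fun t => (hA.differentiable (by norm_num) t).hasDerivAt) (hA.continuous_deriv one_le_two)
    hAo hA'o x
  have hD2 (x : ℝ) := hasDerivAt_integral_Ioi_mul_comp_add hr hw_meas hw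
    (fun t => hAiry t ▸ (hA.differentiable_deriv_two t).hasDerivAt) hA''c hA'o hA''o x
  have hderiv : (deriv fun x => ∫ z in Ioi 0, w z * A (x + z))
      = fun x => ∫ z in Ioi 0, w z * deriv A (x + z) := funext fun x => (hD1 x).deriv
  refine ⟨(hD1 x).differentiableAt, hderiv ▸ (hD2 x).differentiableAt, ?_⟩
  rw [hderiv, (hD2 x).deriv, ← integral_const_mul,
    ← integral_sub (integrableOn_Ioi_mul_comp_add hr hw_meas hw hA''c hA''o x)
      ((integrableOn_Ioi_mul_comp_add hr hw_meas hw hAc hAo x).const_mul x)]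
  congr 1 with z
  ring

lemma Lplus_comm (A : ℝ → ℝ) (s x y : ℝ) : Lplus A s x y = Lplus A s y x := by
  unfold Lplus
  congr 1 with z
  ring

theorem Lplus_airy_operator_fst {A : ℝ → ℝ} {C s : ℝ} (hA : ContDiff ℝ 2 A)
    (hAiry : ∀ t, deriv (deriv A) t = t * A t)
    (hA1 : ∀ t, 0 ≤ t → |A t| ≤ C * exp (-t)) (hA1' : ∀ t, 0 ≤ t → |deriv A t| ≤ C * exp (-t))
    (hs : 0 ≤ s) (x y : ℝ) :
    DifferentiableAt ℝ (fun x' => Lplus A s x' y) x ∧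
    DifferentiableAt ℝ (deriv fun x' => Lplus A s x' y) x ∧
    deriv (deriv fun x' => Lplus A s x' y) x - x * Lplus A s x y
      = ∫ z in Ioi 0, z * exp (-(z * s)) * A (x + z) * A (y + z) := by
  have hL : (fun x' => Lplus A s x' y)
      = fun x' => ∫ z in Ioi 0, (exp (-(z * s)) * A (y + z)) * A (x' + z) := by
    funext x'
    unfold Lplus
    congr 1 with z
    ring
  obtain ⟨K, hK⟩ := hA.continuous.exists_abs_comp_add_le_of_isBigO le_rfl
    (isBigO_exp_neg_of_abs_le (r := 0) zero_le_one hA1) y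
  have hw (z : ℝ) (hz : z ∈ Ioi (0 : ℝ)) : |exp (-(z * s)) * A (y + z)| ≤ K := by
    have hexp : exp (-(z * s)) ≤ 1 := exp_le_one_iff.2 (by nlinarith [mem_Ioi.1 hz])
    rw [abs_mul, abs_of_pos (exp_pos _)]
    exact mul_le_of_le_one_left (abs_nonneg _) hexp |>.trans (by simpa using hK y le_rfl z hz.le)
  have hw_meas : AEStronglyMeasurable (fun z => exp (-(z * s)) * A (y + z))
      (volume.restrict (Ioi 0)) := by
    have hAc := hA.continuous
    exact Continuous.aestronglyMeasurable (by fun_prop)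
  obtain ⟨hd1, hd2, heq⟩ := airy_operator_integral_mul_comp_add hA hAiry hA1 hA1' hw_meas hw x
  refine ⟨hL ▸ hd1, hL ▸ hd2, ?_⟩
  rw [hL, show Lplus A s x y = _ from congrFun hL x, heq]
  congr 1 with z
  ring

theorem lplus_airy_operator_symm_general
    (A : ℝ → ℝ) (hA : ContDiff ℝ 2 A)
    (hAiry : ∀ t : ℝ, deriv (deriv A) t = t * A t)
    (C : ℝ)
    (hA1 : ∀ t : ℝ, 0 ≤ t → |A t| ≤ C * Real.exp (-t))
    (hA1' : ∀ t : ℝ, 0 ≤ t → |deriv A t| ≤ C * Real.exp (-t))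
    (s : ℝ) (hs : 0 ≤ s) (x y : ℝ) :
    DifferentiableAt ℝ (fun x' : ℝ => Lplus A s x' y) x ∧
    DifferentiableAt ℝ (deriv (fun x' : ℝ => Lplus A s x' y)) x ∧
    DifferentiableAt ℝ (fun y' : ℝ => Lplus A s x y') y ∧
    DifferentiableAt ℝ (deriv (fun y' : ℝ => Lplus A s x y')) y ∧
    deriv (deriv (fun x' : ℝ => Lplus A s x' y)) x - x * Lplus A s x y
      = ∫ z in Set.Ioi (0 : ℝ), z * Real.exp (-(z * s)) * A (x + z) * A (y + z) ∧
    (∫ z in Set.Ioi (0 : ℝ), z * Real.exp (-(z * s)) * A (x + z) * A (y + z))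
      = deriv (deriv (fun y' : ℝ => Lplus A s x y')) y - y * Lplus A s x y := by
  obtain ⟨hx1, hx2, hx⟩ := Lplus_airy_operator_fst hA hAiry hA1 hA1' hs x y
  obtain ⟨hy1, hy2, hy⟩ := Lplus_airy_operator_fst hA hAiry hA1 hA1' hs y x
  have hswap : (fun y' => Lplus A s x y') = fun y' => Lplus A s y' x :=
    funext fun y' => Lplus_comm A s x y'
  refine ⟨hx1, hx2, hswap ▸ hy1, hswap ▸ hy2, hx, ?_⟩
  rw [hswap, Lplus_comm A s x y, hy]
  congr 1 with z
  ring

/-- For every `s ≥ 0` and all `x, y ∈ ℝ`, `L⁺_s` is twice differentiable in each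
variable and satisfies
`∂ₓ² L⁺_s(x,y) − x·L⁺_s(x,y) = ∫₀^∞ z·e^{−z·s}·A(x+z)·A(y+z) dz
  = ∂_y² L⁺_s(x,y) − y·L⁺_s(x,y)`;
in particular the Airy operator `d²/dx² − x` in the first variable agrees with
`d²/dy² − y` in the second variable (`D² − M` commutes with `L`). -/
theorem lplus_airy_operator_symm
    (A : ℝ → ℝ) (hA : ContDiff ℝ 2 A)
    (hAiry : ∀ t : ℝ, deriv (deriv A) t = t * A t)
    (C : ℝ) (hC : 0 < C)
    (hA1 : ∀ t : ℝ, 0 ≤ t → |A t| ≤ C * Real.exp (-t))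
    (hA1' : ∀ t : ℝ, 0 ≤ t → |deriv A t| ≤ C * Real.exp (-t))
    (hA2 : ∀ t : ℝ, t ≤ 0 → |A t| ≤ C * (1 + |t|))
    (hA2' : ∀ t : ℝ, t ≤ 0 → |deriv A t| ≤ C * (1 + |t|))
    (s : ℝ) (hs : 0 ≤ s) (x y : ℝ) :
    DifferentiableAt ℝ (fun x' : ℝ => Lplus A s x' y) x ∧
    DifferentiableAt ℝ (deriv (fun x' : ℝ => Lplus A s x' y)) x ∧
    DifferentiableAt ℝ (fun y' : ℝ => Lplus A s x y') y ∧
    DifferentiableAt ℝ (deriv (fun y' : ℝ => Lplus A s x y')) y ∧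
    deriv (deriv (fun x' : ℝ => Lplus A s x' y)) x - x * Lplus A s x y
      = ∫ z in Set.Ioi (0 : ℝ), z * Real.exp (-(z * s)) * A (x + z) * A (y + z) ∧
    (∫ z in Set.Ioi (0 : ℝ), z * Real.exp (-(z * s)) * A (x + z) * A (y + z))
      = deriv (deriv (fun y' : ℝ => Lplus A s x y')) y - y * Lplus A s x y :=
  lplus_airy_operator_symm_general A hA hAiry C hA1 hA1' s hs x y
end

section
/- For every s < 0 and all x, y ∈ ℝ, the sum of the partial derivatives of the kernel entry satisfies ∂ₓ L⁻_s(x,y) + ∂_y L⁻_s(x,y) = s·L⁻_s(x,y) − A(x)·A(y) (the same first-order identity as in the case s ≥ 0). -/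
/-!
Differentiating under the integral sign, `∂ₓ L⁻_s + ∂_y L⁻_s` equals
`-∫_{-∞}^0 e^{-zs} ∂_z (A(x+z) A(y+z)) dz`. Integrating by parts, the derivative of the weight
`e^{-zs}` produces `s·L⁻_s` and the boundary term at `z = 0` produces `-A(x) A(y)`. All integrals
converge, locally uniformly in `x` and `y`, because `A` and `A'` grow at most linearly while
`e^{-zs}` decays exponentially as `z → -∞` when `s < 0`.
-/

open MeasureTheory Real Set

/-- `L⁻_s(x,y) = −∫_{−∞}^0 e^{−z·s}·A(x+z)·A(y+z) dz`, the extended Airy kernel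
entry for `s = τ_i − τ_j < 0`. -/
noncomputable def Lminus (A : ℝ → ℝ) (s x y : ℝ) : ℝ :=
  -∫ z in Set.Iio (0 : ℝ), Real.exp (-(z * s)) * A (x + z) * A (y + z)

open Filter Topology

def HasLinearGrowth (f : ℝ → ℝ) : Prop :=
  ∃ C, ∀ t, |f t| ≤ C * (1 + |t|)

noncomputable def kernelIntegrand (s : ℝ) (f g : ℝ → ℝ) (u v z : ℝ) : ℝ :=
  exp (-(z * s)) * f (u + z) * g (v + z)

lemma kernelIntegrand_comm (s : ℝ) (f g : ℝ → ℝ) (u v : ℝ) :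
    kernelIntegrand s f g u v = kernelIntegrand s g f v u := by
  ext z
  simp only [kernelIntegrand]
  ring

lemma continuous_kernelIntegrand (s : ℝ) {f g : ℝ → ℝ} (hf : Continuous f) (hg : Continuous g)
    (u v : ℝ) : Continuous (kernelIntegrand s f g u v) := by
  unfold kernelIntegrand
  fun_prop

lemma hasLinearGrowth_of_le_exp_of_le_linear {B : ℝ → ℝ} {C : ℝ}
    (hpos : ∀ t, 0 ≤ t → |B t| ≤ C * exp (-t)) (hneg : ∀ t, t ≤ 0 → |B t| ≤ C * (1 + |t|)) :
    HasLinearGrowth B := by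
  refine ⟨C, fun t => ?_⟩
  rcases le_or_gt t 0 with ht | ht
  · exact hneg t ht
  · have hC : 0 ≤ C := by simpa using (abs_nonneg _).trans (hneg 0 le_rfl)
    have hexp : exp (-t) ≤ 1 + |t| := by
      rw [abs_of_pos ht]
      linarith [exp_le_one_iff.mpr (neg_nonpos.mpr ht.le)]
    exact (hpos t ht.le).trans (mul_le_mul_of_nonneg_left hexp hC)

lemma one_add_le_mul_exp {r w : ℝ} (hr : 0 < r) (hw : 0 ≤ w) :
    1 + w ≤ (1 + 1 / r) * exp (r * w) := by
  have hcancel : 1 / r * (r * w) = w := by field_simp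
  calc 1 + w ≤ (1 + 1 / r) * (r * w + 1) := by nlinarith [mul_nonneg hr.le hw, one_div_pos.mpr hr]
    _ ≤ (1 + 1 / r) * exp (r * w) := by gcongr; exact add_one_le_exp _

lemma abs_comp_add_le_mul_exp {f : ℝ → ℝ} {C : ℝ} (hf : ∀ t, |f t| ≤ C * (1 + |t|))
    {r R u z : ℝ} (hr : 0 < r) (hu : |u| ≤ R) (hz : z ≤ 0) :
    |f (u + z)| ≤ C * (1 + R) * (1 + 1 / r) * exp (-(r * z)) := by
  have hC : 0 ≤ C := by simpa using (abs_nonneg _).trans (hf 0)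
  have hR : 0 ≤ R := (abs_nonneg u).trans hu
  have hshift : 1 + |u + z| ≤ (1 + R) * (1 + -z) := by
    nlinarith [abs_add_le u z, abs_of_nonpos hz]
  calc |f (u + z)| ≤ C * (1 + |u + z|) := hf _
    _ ≤ C * ((1 + R) * ((1 + 1 / r) * exp (r * -z))) := by
        gcongr
        exact hshift.trans (by gcongr; exact one_add_le_mul_exp hr (neg_nonneg.mpr hz))
    _ = C * (1 + R) * (1 + 1 / r) * exp (-(r * z)) := by ring_nf

lemma exists_abs_kernelIntegrand_le {s : ℝ} (hs : s < 0) {f g : ℝ → ℝ}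
    (hf : HasLinearGrowth f) (hg : HasLinearGrowth g) (R : ℝ) :
    ∃ K, ∀ u v z, |u| ≤ R → |v| ≤ R → z ≤ 0 →
      |kernelIntegrand s f g u v z| ≤ K * exp (-s / 2 * z) := by
  obtain ⟨C, hf⟩ := hf
  obtain ⟨D, hg⟩ := hg
  -- Each factor of linear growth is bounded by a multiple of `e^{sz/4}`, which uses up a quarter
  -- of the decay of the weight `e^{-zs}`.
  have hr : 0 < -s / 4 := by linarith
  refine ⟨C * (1 + R) * (1 + 1 / (-s / 4)) * (D * (1 + R) * (1 + 1 / (-s / 4))),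
    fun u v z hu hv hz => ?_⟩
  have hweight : exp (-(z * s)) * exp (-(-s / 4 * z)) * exp (-(-s / 4 * z)) = exp (-s / 2 * z) := by
    rw [← exp_add, ← exp_add]
    ring_nf
  rw [kernelIntegrand, abs_mul, abs_mul, abs_exp, ← hweight]
  have hfu := abs_comp_add_le_mul_exp hf hr hu hz
  have hgv := abs_comp_add_le_mul_exp hg hr hv hz
  calc exp (-(z * s)) * |f (u + z)| * |g (v + z)|
      ≤ exp (-(z * s)) * (C * (1 + R) * (1 + 1 / (-s / 4)) * exp (-(-s / 4 * z)))
          * (D * (1 + R) * (1 + 1 / (-s / 4)) * exp (-(-s / 4 * z))) :=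
        mul_le_mul (mul_le_mul_of_nonneg_left hfu (exp_pos _).le) hgv (abs_nonneg _)
          (mul_nonneg (exp_pos _).le ((abs_nonneg _).trans hfu))
    _ = _ := by ring

lemma integrableOn_kernelIntegrand {s : ℝ} (hs : s < 0) {f g : ℝ → ℝ}
    (hfc : Continuous f) (hgc : Continuous g) (hf : HasLinearGrowth f) (hg : HasLinearGrowth g)
    (u v : ℝ) :
    IntegrableOn (kernelIntegrand s f g u v) (Iic 0) := by
  obtain ⟨K, hK⟩ := exists_abs_kernelIntegrand_le hs hf hg (max |u| |v|)
  refine ((integrableOn_exp_mul_Iic (a := -s / 2) (by linarith) 0).const_mul K).mono'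
    (continuous_kernelIntegrand s hfc hgc u v).aestronglyMeasurable ?_
  filter_upwards [ae_restrict_mem measurableSet_Iic] with z hz
  exact hK u v z (le_max_left _ _) (le_max_right _ _) hz

lemma hasDerivAt_kernelIntegrand_left (s : ℝ) {f : ℝ → ℝ} (hf : Differentiable ℝ f)
    (g : ℝ → ℝ) (u v z : ℝ) :
    HasDerivAt (fun u => kernelIntegrand s f g u v z) (kernelIntegrand s (deriv f) g u v z) u := by
  have hshift : HasDerivAt (fun u => f (u + z)) (deriv f (u + z)) u :=
    (hf (u + z)).hasDerivAt.comp_add_const u z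
  exact (hshift.const_mul _).mul_const _

lemma hasDerivAt_kernelIntegrand (s : ℝ) {f g : ℝ → ℝ} (hf : Differentiable ℝ f)
    (hg : Differentiable ℝ g) (u v z : ℝ) :
    HasDerivAt (kernelIntegrand s f g u v)
      (-s * kernelIntegrand s f g u v z + kernelIntegrand s (deriv f) g u v z
        + kernelIntegrand s f (deriv g) u v z) z := by
  have hweight : HasDerivAt (fun z => exp (-(z * s))) (exp (-(z * s)) * -s) z := by
    simpa using ((hasDerivAt_mul_const s).neg).exp
  have hfz : HasDerivAt (fun z => f (u + z)) (deriv f (u + z)) z :=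
    (hf (u + z)).hasDerivAt.comp_const_add u z
  have hgz : HasDerivAt (fun z => g (v + z)) (deriv g (v + z)) z :=
    (hg (v + z)).hasDerivAt.comp_const_add v z
  refine ((hweight.mul hfz).mul hgz).congr_deriv ?_
  simp only [kernelIntegrand, Pi.mul_apply]
  ring

lemma hasDerivAt_integral_kernelIntegrand_left {s : ℝ} (hs : s < 0) {f g : ℝ → ℝ}
    (hfd : ContDiff ℝ 1 f) (hgc : Continuous g) (hf : HasLinearGrowth f)
    (hf' : HasLinearGrowth (deriv f)) (hg : HasLinearGrowth g) (u v : ℝ) :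
    HasDerivAt (fun u => ∫ z in Iic 0, kernelIntegrand s f g u v z)
      (∫ z in Iic 0, kernelIntegrand s (deriv f) g u v z) u := by
  obtain ⟨K, hK⟩ := exists_abs_kernelIntegrand_le hs hf' hg (|u| + |v| + 1)
  have hball : ∀ u' ∈ Metric.ball u 1, |u'| ≤ |u| + |v| + 1 := fun u' hu' => by
    have := abs_sub_abs_le_abs_sub u' u
    rw [Metric.mem_ball, Real.dist_eq] at hu'
    linarith [abs_nonneg v]
  refine (hasDerivAt_integral_of_dominated_loc_of_deriv_le
    (F' := fun u' => kernelIntegrand s (deriv f) g u' v) (Metric.ball_mem_nhds u one_pos)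
    (Eventually.of_forall fun u' =>
      (continuous_kernelIntegrand s hfd.continuous hgc u' v).aestronglyMeasurable)
    (integrableOn_kernelIntegrand hs hfd.continuous hgc hf hg u v)
    (continuous_kernelIntegrand s (hfd.continuous_deriv le_rfl) hgc u v).aestronglyMeasurable
    ?_ ((integrableOn_exp_mul_Iic (a := -s / 2) (by linarith) 0).const_mul K) ?_).2
  · filter_upwards [ae_restrict_mem measurableSet_Iic] with z hz u' hu'
    exact hK u' v z (hball u' hu') (by linarith [abs_nonneg u]) hz
  · exact ae_of_all _ fun z u' _ =>
      hasDerivAt_kernelIntegrand_left s (hfd.differentiable one_ne_zero) g u' v z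

lemma hasDerivAt_integral_kernelIntegrand_right {s : ℝ} (hs : s < 0) {f g : ℝ → ℝ}
    (hfc : Continuous f) (hgd : ContDiff ℝ 1 g) (hf : HasLinearGrowth f)
    (hg : HasLinearGrowth g) (hg' : HasLinearGrowth (deriv g)) (u v : ℝ) :
    HasDerivAt (fun v => ∫ z in Iic 0, kernelIntegrand s f g u v z)
      (∫ z in Iic 0, kernelIntegrand s f (deriv g) u v z) v := by
  simpa only [kernelIntegrand_comm s g, kernelIntegrand_comm s (deriv g)] using
    hasDerivAt_integral_kernelIntegrand_left hs hgd hfc hg hg' hf v u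

/-- Integration by parts on `(-∞, 0]`. The boundary term at `-∞` vanishes because the integrand
and its derivative are both integrable there. -/
lemma integral_Iic_kernelIntegrand_deriv {s : ℝ} (hs : s < 0) {f g : ℝ → ℝ}
    (hfd : ContDiff ℝ 1 f) (hgd : ContDiff ℝ 1 g) (hf : HasLinearGrowth f)
    (hf' : HasLinearGrowth (deriv f)) (hg : HasLinearGrowth g) (hg' : HasLinearGrowth (deriv g))
    (u v : ℝ) :
    -s * (∫ z in Iic 0, kernelIntegrand s f g u v z)
      + (∫ z in Iic 0, kernelIntegrand s (deriv f) g u v z)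
      + (∫ z in Iic 0, kernelIntegrand s f (deriv g) u v z) = f u * g v := by
  have hderiv := hasDerivAt_kernelIntegrand s (hfd.differentiable one_ne_zero)
    (hgd.differentiable one_ne_zero) u v
  have I := integrableOn_kernelIntegrand hs hfd.continuous hgd.continuous hf hg u v
  have I' := integrableOn_kernelIntegrand hs (hfd.continuous_deriv le_rfl) hgd.continuous hf' hg u v
  have I'' := integrableOn_kernelIntegrand hs hfd.continuous (hgd.continuous_deriv le_rfl) hf hg' u v
  have hint := ((I.const_mul (-s)).add I').add I''
  have hlim := tendsto_zero_of_hasDerivAt_of_integrableOn_Iic (fun z _ => hderiv z) hint I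
  have hftc := integral_Iic_of_hasDerivAt_of_tendsto' (fun z _ => hderiv z) hint hlim
  rw [integral_add (f := fun z => -s * kernelIntegrand s f g u v z
      + kernelIntegrand s (deriv f) g u v z) ((I.const_mul (-s)).add I') I'',
    integral_add (I.const_mul (-s)) I', integral_const_mul] at hftc
  simpa [kernelIntegrand] using hftc

lemma Lminus_eq_neg_integral_Iic (A : ℝ → ℝ) (s x y : ℝ) :
    Lminus A s x y = -∫ z in Iic 0, kernelIntegrand s A A x y z := by
  rw [Lminus, integral_Iic_eq_integral_Iio]
  rfl

theorem lminus_deriv_sum_general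
    (A : ℝ → ℝ) (hA : ContDiff ℝ 2 A)
    (C : ℝ)
    (hA1 : ∀ t : ℝ, 0 ≤ t → |A t| ≤ C * Real.exp (-t))
    (hA1' : ∀ t : ℝ, 0 ≤ t → |deriv A t| ≤ C * Real.exp (-t))
    (hA2 : ∀ t : ℝ, t ≤ 0 → |A t| ≤ C * (1 + |t|))
    (hA2' : ∀ t : ℝ, t ≤ 0 → |deriv A t| ≤ C * (1 + |t|))
    (s : ℝ) (hs : s < 0) (x y : ℝ) :
    deriv (fun x' : ℝ => Lminus A s x' y) x + deriv (fun y' : ℝ => Lminus A s x y') y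
      = s * Lminus A s x y - A x * A y := by
  have hA₁ : ContDiff ℝ 1 A := hA.of_le one_le_two
  have hgrowth := hasLinearGrowth_of_le_exp_of_le_linear hA1 hA2
  have hgrowth' := hasLinearGrowth_of_le_exp_of_le_linear hA1' hA2'
  simp only [Lminus_eq_neg_integral_Iic]
  rw [deriv.fun_neg, deriv.fun_neg,
    (hasDerivAt_integral_kernelIntegrand_left hs hA₁ hA₁.continuous hgrowth hgrowth' hgrowth
      x y).deriv,
    (hasDerivAt_integral_kernelIntegrand_right hs hA₁.continuous hA₁ hgrowth hgrowth hgrowth'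
      x y).deriv]
  linarith [integral_Iic_kernelIntegrand_deriv hs hA₁ hA₁ hgrowth hgrowth' hgrowth hgrowth' x y]

/-- For every `s < 0` and all `x, y ∈ ℝ`,
`∂ₓ L⁻_s(x,y) + ∂_y L⁻_s(x,y) = s·L⁻_s(x,y) − A(x)·A(y)`
(the same first-order identity as in the case `s ≥ 0`). -/
theorem lminus_deriv_sum
    (A : ℝ → ℝ) (hA : ContDiff ℝ 2 A)
    (hAiry : ∀ t : ℝ, deriv (deriv A) t = t * A t)
    (C : ℝ) (hC : 0 < C)
    (hA1 : ∀ t : ℝ, 0 ≤ t → |A t| ≤ C * Real.exp (-t))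
    (hA1' : ∀ t : ℝ, 0 ≤ t → |deriv A t| ≤ C * Real.exp (-t))
    (hA2 : ∀ t : ℝ, t ≤ 0 → |A t| ≤ C * (1 + |t|))
    (hA2' : ∀ t : ℝ, t ≤ 0 → |deriv A t| ≤ C * (1 + |t|))
    (s : ℝ) (hs : s < 0) (x y : ℝ) :
    deriv (fun x' : ℝ => Lminus A s x' y) x + deriv (fun y' : ℝ => Lminus A s x y') y
      = s * Lminus A s x y - A x * A y :=
  lminus_deriv_sum_general A hA C hA1 hA1' hA2 hA2' s hs x y
end

section
/- Suppose q, p, u, q̃, r : ℝ → M_m(ℝ) are differentiable (q twice differentiable) and satisfy the first-order system Dq = p − q·Θ·u + [τ, q], Dp = Ξ·q + q·Θ·q̃·q + (Dq)·Θ·u − 2·[τ, r]·q − [τ, Dq], and Du = −q̃·q. Then q satisfies the second-order equation D²q = Ξ·q + 2·q·Θ·q̃·q − 2·[τ, r]·q (equation (1) of the system characterizing the Airy process). -/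
open Matrix

attribute [local instance] Matrix.normedAddCommGroup Matrix.normedSpace

/-! Differentiating `Dq = p − q·Θ·u + [τ, q]` once more by the product rule gives
`D²q = Dp − (Dq)·Θ·u − q·Θ·Du + [τ, Dq]`; substituting `Dp` and `Du = −q̃·q`, the terms
`(Dq)·Θ·u` and `[τ, Dq]` cancel and the two copies of `q·Θ·q̃·q` add up. -/

namespace HasDerivAt

variable {𝕜 n : Type*} [NontriviallyNormedField 𝕜] [Fintype n] [DecidableEq n]
  {a b : 𝕜 → Matrix n n 𝕜} {a' b' : Matrix n n 𝕜} {x : 𝕜}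

/- `HasDerivAt` only sees the product topology on matrices, so the product rule may be borrowed
from any normed-algebra structure inducing it, here the `L^∞` operator norm. -/
theorem matrix_mul (ha : HasDerivAt a a' x) (hb : HasDerivAt b b' x) :
    HasDerivAt (fun y => a y * b y) (a' * b x + a x * b') x :=
  let _ := Matrix.linftyOpNormedRing (n := n) (α := 𝕜)
  let _ := Matrix.linftyOpNormedAlgebra (n := n) (R := 𝕜) (α := 𝕜)
  ha.mul hb

theorem matrix_mul_const (ha : HasDerivAt a a' x) (B : Matrix n n 𝕜) :
    HasDerivAt (fun y => a y * B) (a' * B) x := by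
  simpa using ha.matrix_mul (hasDerivAt_const x B)

theorem matrix_const_mul (A : Matrix n n 𝕜) (hb : HasDerivAt b b' x) :
    HasDerivAt (fun y => A * b y) (A * b') x := by
  simpa using (hasDerivAt_const x A).matrix_mul hb

theorem matrix_const_lie (A : Matrix n n 𝕜) (hb : HasDerivAt b b' x) :
    HasDerivAt (fun y => ⁅A, b y⁆) ⁅A, b'⁆ x := by
  simp only [Ring.lie_def]
  exact (hb.matrix_const_mul A).fun_sub (hb.matrix_mul_const A)

end HasDerivAt

theorem airy_system_eq1_general
    (m : ℕ)
    (τ Θ : Matrix (Fin m) (Fin m) ℝ)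
    (Ξ q p u qt r : ℝ → Matrix (Fin m) (Fin m) ℝ)
    (hq : Differentiable ℝ q)
    (hp : Differentiable ℝ p) (hu : Differentiable ℝ u)
    (eq_q : ∀ x, deriv q x = p x - q x * Θ * u x + ⁅τ, q x⁆)
    (eq_p : ∀ x, deriv p x =
      Ξ x * q x + q x * Θ * qt x * q x + deriv q x * Θ * u x
        - (2 : ℝ) • (⁅τ, r x⁆ * q x) - ⁅τ, deriv q x⁆)
    (eq_u : ∀ x, deriv u x = -(qt x * q x)) :
    ∀ x, deriv (deriv q) x =
      Ξ x * q x + (2 : ℝ) • (q x * Θ * qt x * q x) - (2 : ℝ) • (⁅τ, r x⁆ * q x) := by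
  intro x
  have hq' := (hq x).hasDerivAt
  have hrhs : HasDerivAt (fun y => p y - q y * Θ * u y + ⁅τ, q y⁆)
      (deriv p x - (deriv q x * Θ * u x + q x * Θ * deriv u x) + ⁅τ, deriv q x⁆) x :=
    ((hp x).hasDerivAt.sub ((hq'.matrix_mul_const Θ).matrix_mul (hu x).hasDerivAt)).add
      (hq'.matrix_const_lie τ)
  calc deriv (deriv q) x = deriv (fun y => p y - q y * Θ * u y + ⁅τ, q y⁆) x := by
        rw [funext eq_q]
    _ = deriv p x - (deriv q x * Θ * u x + q x * Θ * deriv u x) + ⁅τ, deriv q x⁆ := hrhs.deriv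
    _ = Ξ x * q x + (2 : ℝ) • (q x * Θ * qt x * q x) - (2 : ℝ) • (⁅τ, r x⁆ * q x) := by
        rw [eq_p, eq_u]
        simp only [mul_neg, two_smul, mul_assoc]
        abel

/-- Equation (1) of the system characterizing the Airy process:
if `Dq = p − q·Θ·u + [τ, q]`,
`Dp = Ξ·q + q·Θ·q̃·q + (Dq)·Θ·u − 2·[τ, r]·q − [τ, Dq]`, and `Du = −q̃·q`, then
`D²q = Ξ·q + 2·q·Θ·q̃·q − 2·[τ, r]·q`. -/
theorem airy_system_eq1
    (m : ℕ) (hm : 1 ≤ m)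
    (τ Θ : Matrix (Fin m) (Fin m) ℝ)
    (hτ : τ.IsDiag) (hΘ : ∀ i j, Θ i j = 1)
    (Ξ q p u qt r : ℝ → Matrix (Fin m) (Fin m) ℝ)
    (hΞdiff : Differentiable ℝ Ξ) (hΞdiag : ∀ x, (Ξ x).IsDiag)
    (hq : Differentiable ℝ q) (hq' : Differentiable ℝ (deriv q))
    (hp : Differentiable ℝ p) (hu : Differentiable ℝ u)
    (hqt : Differentiable ℝ qt) (hr : Differentiable ℝ r)
    (eq_q : ∀ x, deriv q x = p x - q x * Θ * u x + ⁅τ, q x⁆)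
    (eq_p : ∀ x, deriv p x =
      Ξ x * q x + q x * Θ * qt x * q x + deriv q x * Θ * u x
        - (2 : ℝ) • (⁅τ, r x⁆ * q x) - ⁅τ, deriv q x⁆)
    (eq_u : ∀ x, deriv u x = -(qt x * q x)) :
    ∀ x, deriv (deriv q) x =
      Ξ x * q x + (2 : ℝ) • (q x * Θ * qt x * q x) - (2 : ℝ) • (⁅τ, r x⁆ * q x) :=
  airy_system_eq1_general m τ Θ Ξ q p u qt r hq hp hu eq_q eq_p eq_u
end

section
/- Suppose q, p, u, q̃, p̃, ũ, r : ℝ → M_m(ℝ) are differentiable (q and q̃ twice differentiable) and satisfy: (i) Dq = p − q·Θ·u + [τ, q]; (ii) Dp = Ξ·q + q·Θ·q̃·q + (Dq)·Θ·u − 2·[τ, r]·q − [τ, Dq]; (iii) Du = −q̃·q; (iv) D(q̃ᵗ) = p̃ᵗ − q̃ᵗ·Θ·ũ + [−τ, q̃ᵗ]; (v) D(p̃ᵗ) = Ξ·q̃ᵗ + q̃ᵗ·Θ·qᵗ·q̃ᵗ + (D(q̃ᵗ))·Θ·ũ − 2·[−τ, rᵗ]·q̃ᵗ − [−τ, D(q̃ᵗ)];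 (vi) Dũ = −qᵗ·q̃ᵗ; (vii) Dr = −q·Θ·q̃ + [τ, r]. Then the triple (q, q̃, r) satisfies the full system D²q = Ξ·q + 2·q·Θ·q̃·q − 2·[τ, r]·q, D²q̃ = q̃·Ξ + 2·q̃·q·Θ·q̃ − 2·q̃·[τ, r], and Dr = −q·Θ·q̃ + [τ, r] (equations (1), (2), (3) characterizing the finite-dimensional distributions of the Airy process). -/
open Matrix

attribute [local instance] Matrix.normedAddCommGroup Matrix.normedSpace

/-!
Differentiating (i) and substituting (ii) and (iii) eliminates `p` and `u` and gives (1). Equations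
(iv)–(vi) are the same system for `q̃ᵗ, p̃ᵗ, ũ` with `τ` replaced by `-τ` and `r` by `rᵗ`, so they give
(1) for `q̃ᵗ`; transposing, with `τ`, `Θ` and `Ξ` symmetric, yields (2). Equation (3) is (vii).
-/

section MatrixCalculus

variable {𝕜 : Type*} [NontriviallyNormedField 𝕜] {l m n : Type*} [Fintype m] [Fintype n]

noncomputable def Matrix.transposeₗᵢ : Matrix m n 𝕜 ≃ₗᵢ[𝕜] Matrix n m 𝕜 :=
  { transposeLinearEquiv m n 𝕜 𝕜 with norm_map' := norm_transpose }

theorem HasDerivAt.matrix_mul_s11 {f : 𝕜 → Matrix l m 𝕜} {g : 𝕜 → Matrix m n 𝕜}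
    {f' : Matrix l m 𝕜} {g' : Matrix m n 𝕜} {x : 𝕜}
    (hf : HasDerivAt f f' x) (hg : HasDerivAt g g' x) :
    HasDerivAt (fun t => f t * g t) (f' * g x + f x * g') x := by
  refine hasDerivAt_pi.2 fun i => hasDerivAt_pi.2 fun j => ?_
  have hf_entry (k) : HasDerivAt (fun t => f t i k) (f' i k) x :=
    hasDerivAt_pi.1 (hasDerivAt_pi.1 hf i) k
  have hg_entry (k) : HasDerivAt (fun t => g t k j) (g' k j) x :=
    hasDerivAt_pi.1 (hasDerivAt_pi.1 hg k) j
  simpa only [mul_apply, Matrix.add_apply, Pi.mul_apply, Finset.sum_add_distrib] using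
    HasDerivAt.fun_sum fun k _ => (hf_entry k).mul (hg_entry k)

theorem HasDerivAt.matrix_transpose {f : 𝕜 → Matrix m n 𝕜} {f' : Matrix m n 𝕜} {x : 𝕜}
    (hf : HasDerivAt f f' x) : HasDerivAt (fun t => (f t)ᵀ) f'ᵀ x :=
  (transposeₗᵢ : Matrix m n 𝕜 ≃ₗᵢ[𝕜] Matrix n m 𝕜).hasFDerivAt.comp_hasDerivAt x hf

theorem deriv_matrix_transpose (f : 𝕜 → Matrix m n 𝕜) (x : 𝕜) :
    deriv (fun t => (f t)ᵀ) x = (deriv f x)ᵀ :=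
  congrArg (· 1) ((transposeₗᵢ : Matrix m n 𝕜 ≃ₗᵢ[𝕜] Matrix n m 𝕜).comp_fderiv (f := f) (x := x))

end MatrixCalculus

theorem deriv_deriv_eq_of_first_order_system {𝕜 n : Type*} [NontriviallyNormedField 𝕜]
    [Fintype n] [DecidableEq n] (τ Θ : Matrix n n 𝕜) (Ξ Q P U Qt R : 𝕜 → Matrix n n 𝕜)
    (hQ : Differentiable 𝕜 Q) (hP : Differentiable 𝕜 P) (hU : Differentiable 𝕜 U)
    (hQ' : ∀ x, deriv Q x = P x - Q x * Θ * U x + ⁅τ, Q x⁆)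
    (hP' : ∀ x, deriv P x = Ξ x * Q x + Q x * Θ * Qt x * Q x + deriv Q x * Θ * U x
        - (2 : 𝕜) • (⁅τ, R x⁆ * Q x) - ⁅τ, deriv Q x⁆)
    (hU' : ∀ x, deriv U x = -(Qt x * Q x)) (x : 𝕜) :
    deriv (deriv Q) x =
      Ξ x * Q x + (2 : 𝕜) • (Q x * Θ * Qt x * Q x) - (2 : 𝕜) • (⁅τ, R x⁆ * Q x) := by
  have hQx := (hQ x).hasDerivAt
  have hQΘU : HasDerivAt (fun t => Q t * Θ * U t)
      (deriv Q x * Θ * U x + Q x * Θ * deriv U x) x := by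
    refine ((hQx.matrix_mul_s11 (hasDerivAt_const x Θ)).matrix_mul_s11 (hU x).hasDerivAt).congr_deriv ?_
    rw [mul_zero, add_zero]
    -- the sides differ only in the (defeq) instance paths through which `deriv` sees the norm
    rfl
  have hτQ : HasDerivAt (fun t => ⁅τ, Q t⁆) ⁅τ, deriv Q x⁆ x := by
    simp only [Ring.lie_def]
    refine (((hasDerivAt_const x τ).matrix_mul_s11 hQx).fun_sub
      (hQx.matrix_mul_s11 (hasDerivAt_const x τ))).congr_deriv ?_
    rw [zero_mul, mul_zero, zero_add, add_zero]
    rfl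
  have hQ'' : deriv (deriv Q) x =
      deriv P x - (deriv Q x * Θ * U x + Q x * Θ * deriv U x) + ⁅τ, deriv Q x⁆ := by
    conv_lhs => rw [show deriv Q = _ from funext hQ']
    exact (((hP x).hasDerivAt.fun_sub hQΘU).fun_add hτQ).deriv
  rw [hQ'', hP' x, hU' x]
  simp only [Ring.lie_def, two_smul]
  noncomm_ring

theorem airy_system_full_general
    (m : ℕ)
    (τ Θ : Matrix (Fin m) (Fin m) ℝ)
    (hτ : τ.IsDiag) (hΘ : ∀ i j, Θ i j = 1)
    (Ξ q p u qt pt ut r : ℝ → Matrix (Fin m) (Fin m) ℝ)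
    (hΞdiag : ∀ x, (Ξ x).IsDiag)
    (hq : Differentiable ℝ q)
    (hp : Differentiable ℝ p) (hu : Differentiable ℝ u)
    (hqt : Differentiable ℝ qt)
    (hpt : Differentiable ℝ pt) (hut : Differentiable ℝ ut)
    -- (i)
    (eq1 : ∀ x, deriv q x = p x - q x * Θ * u x + ⁅τ, q x⁆)
    -- (ii)
    (eq2 : ∀ x, deriv p x =
      Ξ x * q x + q x * Θ * qt x * q x + deriv q x * Θ * u x
        - (2 : ℝ) • (⁅τ, r x⁆ * q x) - ⁅τ, deriv q x⁆)
    -- (iii)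
    (eq3 : ∀ x, deriv u x = -(qt x * q x))
    -- (iv)
    (eq4 : ∀ x, deriv (fun t => (qt t)ᵀ) x =
      (pt x)ᵀ - (qt x)ᵀ * Θ * ut x + ⁅-τ, (qt x)ᵀ⁆)
    -- (v)
    (eq5 : ∀ x, deriv (fun t => (pt t)ᵀ) x =
      Ξ x * (qt x)ᵀ + (qt x)ᵀ * Θ * (q x)ᵀ * (qt x)ᵀ
        + deriv (fun t => (qt t)ᵀ) x * Θ * ut x
        - (2 : ℝ) • (⁅-τ, (r x)ᵀ⁆ * (qt x)ᵀ) - ⁅-τ, deriv (fun t => (qt t)ᵀ) x⁆)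
    -- (vi)
    (eq6 : ∀ x, deriv ut x = -((q x)ᵀ * (qt x)ᵀ))
    -- (vii)
    (eq7 : ∀ x, deriv r x = -(q x * Θ * qt x) + ⁅τ, r x⁆) :
    (∀ x, deriv (deriv q) x =
        Ξ x * q x + (2 : ℝ) • (q x * Θ * qt x * q x) - (2 : ℝ) • (⁅τ, r x⁆ * q x)) ∧
    (∀ x, deriv (deriv qt) x =
        qt x * Ξ x + (2 : ℝ) • (qt x * q x * Θ * qt x) - (2 : ℝ) • (qt x * ⁅τ, r x⁆)) ∧
    (∀ x, deriv r x = -(q x * Θ * qt x) + ⁅τ, r x⁆) := by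
  refine ⟨deriv_deriv_eq_of_first_order_system τ Θ Ξ q p u qt r hq hp hu eq1 eq2 eq3,
    fun x => ?_, eq7⟩
  have hτ_symm : τᵀ = τ := hτ.isSymm
  have hΘ_symm : Θᵀ = Θ := by ext i j; simp only [transpose_apply, hΘ]
  have hdiff_transpose {f : ℝ → Matrix (Fin m) (Fin m) ℝ} (hf : Differentiable ℝ f) :
      Differentiable ℝ fun t => (f t)ᵀ :=
    fun t => (hf t).hasDerivAt.matrix_transpose.differentiableAt
  have hqt_transpose := deriv_deriv_eq_of_first_order_system (-τ) Θ Ξ (fun t => (qt t)ᵀ)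
    (fun t => (pt t)ᵀ) ut (fun t => (q t)ᵀ) (fun t => (r t)ᵀ)
    (hdiff_transpose hqt) (hdiff_transpose hpt) hut eq4 eq5 eq6 x
  have hqt'' : deriv (deriv qt) x = (deriv (deriv fun t => (qt t)ᵀ) x)ᵀ := by
    simp only [funext (deriv_matrix_transpose qt), deriv_matrix_transpose, transpose_transpose]
  rw [hqt'', hqt_transpose]
  simp only [transpose_add, transpose_sub, transpose_smul, transpose_mul,
    transpose_transpose, transpose_neg, hτ_symm, hΘ_symm, (hΞdiag x).isSymm.eq,
    Ring.lie_def]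
  noncomm_ring

/-- The full system (equations (1), (2), (3)) characterizing the
finite-dimensional distributions of the Airy process follows from the
first-order equations (i)–(vii) for `q, p, u, q̃, p̃, ũ, r`. -/
theorem airy_system_full
    (m : ℕ) (hm : 1 ≤ m)
    (τ Θ : Matrix (Fin m) (Fin m) ℝ)
    (hτ : τ.IsDiag) (hΘ : ∀ i j, Θ i j = 1)
    (Ξ q p u qt pt ut r : ℝ → Matrix (Fin m) (Fin m) ℝ)
    (hΞdiff : Differentiable ℝ Ξ) (hΞdiag : ∀ x, (Ξ x).IsDiag)
    (hq : Differentiable ℝ q) (hq' : Differentiable ℝ (deriv q))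
    (hp : Differentiable ℝ p) (hu : Differentiable ℝ u)
    (hqt : Differentiable ℝ qt) (hqt' : Differentiable ℝ (deriv qt))
    (hpt : Differentiable ℝ pt) (hut : Differentiable ℝ ut)
    (hr : Differentiable ℝ r)
    -- (i)
    (eq1 : ∀ x, deriv q x = p x - q x * Θ * u x + ⁅τ, q x⁆)
    -- (ii)
    (eq2 : ∀ x, deriv p x =
      Ξ x * q x + q x * Θ * qt x * q x + deriv q x * Θ * u x
        - (2 : ℝ) • (⁅τ, r x⁆ * q x) - ⁅τ, deriv q x⁆)
    -- (iii)
    (eq3 : ∀ x, deriv u x = -(qt x * q x))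
    -- (iv)
    (eq4 : ∀ x, deriv (fun t => (qt t)ᵀ) x =
      (pt x)ᵀ - (qt x)ᵀ * Θ * ut x + ⁅-τ, (qt x)ᵀ⁆)
    -- (v)
    (eq5 : ∀ x, deriv (fun t => (pt t)ᵀ) x =
      Ξ x * (qt x)ᵀ + (qt x)ᵀ * Θ * (q x)ᵀ * (qt x)ᵀ
        + deriv (fun t => (qt t)ᵀ) x * Θ * ut x
        - (2 : ℝ) • (⁅-τ, (r x)ᵀ⁆ * (qt x)ᵀ) - ⁅-τ, deriv (fun t => (qt t)ᵀ) x⁆)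
    -- (vi)
    (eq6 : ∀ x, deriv ut x = -((q x)ᵀ * (qt x)ᵀ))
    -- (vii)
    (eq7 : ∀ x, deriv r x = -(q x * Θ * qt x) + ⁅τ, r x⁆) :
    (∀ x, deriv (deriv q) x =
        Ξ x * q x + (2 : ℝ) • (q x * Θ * qt x * q x) - (2 : ℝ) • (⁅τ, r x⁆ * q x)) ∧
    (∀ x, deriv (deriv qt) x =
        qt x * Ξ x + (2 : ℝ) • (qt x * q x * Θ * qt x) - (2 : ℝ) • (qt x * ⁅τ, r x⁆)) ∧
    (∀ x, deriv r x = -(q x * Θ * qt x) + ⁅τ, r x⁆) :=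
  airy_system_full_general m τ Θ hτ hΘ Ξ q p u qt pt ut r hΞdiag hq hp hu hqt hpt hut eq1 eq2 eq3
    eq4 eq5 eq6 eq7
end
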